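/- Let M = {(z,w) ∈ ℂ² : Im w = |z|²}, identified with ℂ×ℝ via ι(z,s) = (z, s+i|z|²), with CR vector field Λ = ∂/∂z̄ − iz ∂/∂s. Let φ : ℂ×ℝ → ℂ be a C² function defined near 0 with Λφ = 0, φ(0) = 0, and (∂φ/∂z)(0) ≠ 0. Set f = (φ², φ) and f̄ = (conj(φ)², conj(φ)). Then the two vectors (Λ f̄)(0) and (Λ² f̄)(0) span ℂ² (indeed (Λ f̄)(0) = (0, conj((∂φ/∂z)(0))) and the first component of (Λ² f̄)(0) is 2·conj((∂φ/∂z)(0))² ≠ 0). -/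

import Mathlib

/-! Since `Λ` is a derivation, `Λ(ψ²) = 2ψ Λψ` and `Λ²(ψ²) = 2(Λψ)² + 2ψ Λ²ψ`. For `ψ = φ̄`,
`ψ(0) = 0`, and because the `∂/∂s` term of `Λ` carries the factor `z`, `(Λψ)(0) = conj (φ_z(0))`.
So `(Λf̄)(0) = (0, conj φ_z(0))` and `(Λ²f̄)(0) = (2 conj φ_z(0)², ∗)`: a triangular pair with
nonzero diagonal. -/

open Complex Topology

noncomputable section

/-- The Wirtinger derivative `∂/∂z̄` of a function on `ℂ × ℝ`. -/
def dzb (f : ℂ × ℝ → ℂ) (p : ℂ × ℝ) : ℂ :=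
  (1 / 2 : ℂ) * (fderiv ℝ f p (1, 0) + Complex.I * fderiv ℝ f p (Complex.I, 0))

/-- The Wirtinger derivative `∂/∂z` of a function on `ℂ × ℝ`. -/
def dz (f : ℂ × ℝ → ℂ) (p : ℂ × ℝ) : ℂ :=
  (1 / 2 : ℂ) * (fderiv ℝ f p (1, 0) - Complex.I * fderiv ℝ f p (Complex.I, 0))

/-- The derivative `∂/∂s` of a function on `ℂ × ℝ`. -/
def dsR (f : ℂ × ℝ → ℂ) (p : ℂ × ℝ) : ℂ := fderiv ℝ f p (0, 1)

/-- The CR vector field `Λ = ∂/∂z̄ − iz ∂/∂s` of `M = {Im w = |z|²}`. -/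
def Lam (f : ℂ × ℝ → ℂ) (p : ℂ × ℝ) : ℂ :=
  dzb f p - Complex.I * p.1 * dsR f p

/-- `Λ` acting componentwise on `ℂ²`-valued functions. -/
def LamV (v : ℂ × ℝ → ℂ × ℂ) (p : ℂ × ℝ) : ℂ × ℂ :=
  (Lam (fun q => (v q).1) p, Lam (fun q => (v q).2) p)


open ComplexConjugate

section CRVectorField

variable {f g : ℂ × ℝ → ℂ} {p : ℂ × ℝ}

theorem Filter.EventuallyEq.Lam_eq (h : f =ᶠ[𝓝 p] g) : Lam f p = Lam g p := by
  simp only [Lam, dzb, dsR, h.fderiv_eq]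

theorem Lam_mul (hf : DifferentiableAt ℝ f p) (hg : DifferentiableAt ℝ g p) :
    Lam (fun q => f q * g q) p = f p * Lam g p + g p * Lam f p := by
  simp only [Lam, dzb, dsR, fderiv_fun_mul hf hg, add_apply, smul_apply,
    smul_eq_mul]
  ring

theorem Lam_const_mul (c : ℂ) (hf : DifferentiableAt ℝ f p) :
    Lam (fun q => c * f q) p = c * Lam f p := by
  simp only [Lam, dzb, dsR, fderiv_const_mul hf c, smul_apply, smul_eq_mul]
  ring

theorem Lam_sq (hf : DifferentiableAt ℝ f p) :
    Lam (fun q => f q ^ 2) p = 2 * f p * Lam f p := by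
  simp only [sq, Lam_mul hf hf]
  ring

theorem Lam_conj :
    Lam (fun q => conj (f q)) p = conj (dz f p) - I * p.1 * conj (dsR f p) := by
  have hconj (v : ℂ × ℝ) : fderiv ℝ (fun q => conj (f q)) p v = conj (fderiv ℝ f p v) := by
    rw [show (fun q => conj (f q)) = conjCLE ∘ f from rfl, ContinuousLinearEquiv.comp_fderiv]
    rfl
  simp only [Lam, dzb, dz, dsR, hconj, map_mul, map_sub, conj_I, map_div₀, map_one, map_ofNat]
  ring

theorem ContDiffAt.differentiableAt_Lam (hf : ContDiffAt ℝ 2 f p) :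
    DifferentiableAt ℝ (Lam f) p := by
  have hdf : DifferentiableAt ℝ (fderiv ℝ f) p :=
    (hf.fderiv_right (m := 1) (by norm_num)).differentiableAt (by norm_num)
  unfold Lam dzb dsR
  fun_prop

theorem Lam_Lam_sq (hf : ContDiffAt ℝ 2 f p) :
    Lam (Lam fun q => f q ^ 2) p = 2 * Lam f p ^ 2 + 2 * f p * Lam (Lam f) p := by
  have hdiff : ∀ᶠ q in 𝓝 p, DifferentiableAt ℝ f q :=
    (hf.eventually (by simp)).mono fun q hq => hq.differentiableAt (by norm_num)
  have hLam_sq : (Lam fun q => f q ^ 2) =ᶠ[𝓝 p] fun q => (2 * f q) * Lam f q :=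
    hdiff.mono fun q hq => Lam_sq hq
  have hdf := hdiff.self_of_nhds
  rw [hLam_sq.Lam_eq, Lam_mul (hdf.const_mul 2) hf.differentiableAt_Lam, Lam_const_mul 2 hdf]
  ring

end CRVectorField

theorem span_pair_zero_mk_eq_top {K : Type*} [Field K] {a b : K} (ha : a ≠ 0) (hb : b ≠ 0)
    (c : K) : Submodule.span K {((0 : K), a), (b, c)} = ⊤ := by
  refine eq_top_iff.2 fun ⟨x, y⟩ _ => Submodule.mem_span_pair.2
    ⟨(y - x / b * c) / a, x / b, ?_⟩
  ext <;> simp only [Prod.smul_mk, Prod.fst_add, Prod.snd_add, smul_eq_mul] <;> field_simp <;> ring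

theorem zaitsev_example_general (φ : ℂ × ℝ → ℂ) (U : Set (ℂ × ℝ)) (hU : IsOpen U)
    (h0U : (0 : ℂ × ℝ) ∈ U)
    (hφsm : ContDiffOn ℝ 2 φ U)
    (hφ0 : φ 0 = 0)
    (hφz0 : dz φ 0 ≠ 0) :
    LamV (fun p => (((starRingEnd ℂ) (φ p)) ^ 2, (starRingEnd ℂ) (φ p))) 0 =
      (0, (starRingEnd ℂ) (dz φ 0)) ∧
    (LamV (LamV (fun p => (((starRingEnd ℂ) (φ p)) ^ 2, (starRingEnd ℂ) (φ p)))) 0).1 =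
      2 * ((starRingEnd ℂ) (dz φ 0)) ^ 2 ∧
    2 * ((starRingEnd ℂ) (dz φ 0)) ^ 2 ≠ 0 ∧
    Submodule.span ℂ
      {LamV (fun p => (((starRingEnd ℂ) (φ p)) ^ 2, (starRingEnd ℂ) (φ p))) 0,
        LamV (LamV (fun p => (((starRingEnd ℂ) (φ p)) ^ 2, (starRingEnd ℂ) (φ p)))) 0} = ⊤ := by
  set ψ : ℂ × ℝ → ℂ := fun q => conj (φ q)
  have hψ : ContDiffAt ℝ 2 ψ 0 :=
    conjCLE.contDiff.contDiffAt.comp 0 (hφsm.contDiffAt (hU.mem_nhds h0U))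
  have hψ0 : ψ 0 = 0 := by simp [ψ, hφ0]
  have hLamψ : Lam ψ 0 = conj (dz φ 0) := by simp [ψ, Lam_conj]
  have hfirst : LamV (fun p => (ψ p ^ 2, ψ p)) 0 = (0, conj (dz φ 0)) := by
    simp [LamV, Lam_sq (hψ.differentiableAt (by norm_num)), hψ0, hLamψ]
  have hsecond : (LamV (LamV fun p => (ψ p ^ 2, ψ p)) 0).1 = 2 * conj (dz φ 0) ^ 2 := by
    simp [LamV, Lam_Lam_sq hψ, hψ0, hLamψ]
  have hne : 2 * conj (dz φ 0) ^ 2 ≠ 0 := by simpa using hφz0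
  refine ⟨hfirst, hsecond, hne, ?_⟩
  rw [hfirst, ← Prod.mk.eta (p := LamV _ 0), hsecond]
  exact span_pair_zero_mk_eq_top (by simpa using hφz0) hne _

/-- Example 1.6, due to D. Zaitsev: for a `C²` CR function `φ` on
`M = {Im w = |z|²}` with `φ(0) = 0` and `φ_z(0) ≠ 0`, setting `f̄ = (conj φ ², conj φ)`,
the vectors `(Λ f̄)(0)` and `(Λ² f̄)(0)` span `ℂ²`; indeed `(Λ f̄)(0) = (0, conj (φ_z(0)))`
and the first component of `(Λ² f̄)(0)` is `2 conj(φ_z(0))² ≠ 0`. -/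
theorem zaitsev_example (φ : ℂ × ℝ → ℂ) (U : Set (ℂ × ℝ)) (hU : IsOpen U)
    (h0U : (0 : ℂ × ℝ) ∈ U)
    (hφsm : ContDiffOn ℝ 2 φ U)
    (hφCR : ∀ p ∈ U, Lam φ p = 0)
    (hφ0 : φ 0 = 0)
    (hφz0 : dz φ 0 ≠ 0) :
    LamV (fun p => (((starRingEnd ℂ) (φ p)) ^ 2, (starRingEnd ℂ) (φ p))) 0 =
      (0, (starRingEnd ℂ) (dz φ 0)) ∧
    (LamV (LamV (fun p => (((starRingEnd ℂ) (φ p)) ^ 2, (starRingEnd ℂ) (φ p)))) 0).1 =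
      2 * ((starRingEnd ℂ) (dz φ 0)) ^ 2 ∧
    2 * ((starRingEnd ℂ) (dz φ 0)) ^ 2 ≠ 0 ∧
    Submodule.span ℂ
      {LamV (fun p => (((starRingEnd ℂ) (φ p)) ^ 2, (starRingEnd ℂ) (φ p))) 0,
        LamV (LamV (fun p => (((starRingEnd ℂ) (φ p)) ^ 2, (starRingEnd ℂ) (φ p)))) 0} = ⊤ :=
  zaitsev_example_general φ U hU h0U hφsm hφ0 hφz0
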